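/- Define E⁺ = E × {0} ⊂ ℝⁿ⁺ᴰ and for (x₀,0) ∈ E⁺, M > 0, let Γ((x₀,0), M) = {P ∈ P⁺ : P(x₀,0) = 0, ∇_ξ P(x₀,0) ∈ K(x₀), and |∂_x^α ∂_ξ^β P(x₀,0)| ≤ M for all |α|+|β| ≤ m}. Then Γ⃗ = (Γ((x₀,0),M)) is a (C,1)-convex shape field on E⁺ (for the parameters m+1, n+D in place of m, n), where C depends only on m, n, D. In particular: if P₁, P₂ ∈ Γ((x₀,0),M), Q₁, Q₂ ∈ P⁺ with |∂_x^α∂_ξ^β Q_i(x₀,0)| ≤ δ^{−|α|−|β|} for |α|+|β| ≤ m and Q₁⊙Q₁ + Q₂⊙Q₂ = 1 (multiplication of m-jets at (x₀,0)), and |∂_x^α∂_ξ^β(P₁−P₂)(x₀,0)| ≤ Mδ^{(m+1)−|α|−|β|} for |α|+|β| ≤ m with 0 < δ ≤ 1, then P := Q₁⊙Q₁⊙P₁ + Q₂⊙Q₂⊙P₂ satisfies P(x₀,0) = 0, ∇_ξ P(x₀,0) = Q₁(x₀,0)²∇_ξP₁(x₀,0) + Q₂(x₀,0)²∇_ξP₂(x₀,0)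 ∈ K(x₀), and P ∈ Γ((x₀,0), CM). -/

import Mathlib

noncomputable section

/-- Iterated partial derivative `∂^β` of a multivariate polynomial. -/
def pdiff {N : ℕ} (β : Fin N → ℕ) (P : MvPolynomial (Fin N) ℝ) :
    MvPolynomial (Fin N) ℝ :=
  (List.finRange N).foldr (fun i Q => (fun R => MvPolynomial.pderiv i R)^[β i] Q) P

/-- `∂^β P (x)`. -/
def pdEval {N : ℕ} (β : Fin N → ℕ) (P : MvPolynomial (Fin N) ℝ) (x : Fin N → ℝ) : ℝ :=
  MvPolynomial.eval x (pdiff β P)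

/-- The multiindices of order `≤ m' - 1` as a `Finset`. -/
def multiIdx (m' N : ℕ) : Finset (Fin N → ℕ) :=
  (Fintype.piFinset fun _ : Fin N => Finset.range m').filter fun α => (∑ i, α i) ≤ m' - 1

/-- The `(m'-1)`-st degree Taylor polynomial (jet) of `R` at `x`. -/
def jetAt (m' : ℕ) {N : ℕ} (x : Fin N → ℝ) (R : MvPolynomial (Fin N) ℝ) :
    MvPolynomial (Fin N) ℝ :=
  ∑ α ∈ multiIdx m' N,
    MvPolynomial.C (pdEval α R x / ((∏ i, Nat.factorial (α i) : ℕ) : ℝ)) *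
      ∏ i, (MvPolynomial.X i - MvPolynomial.C (x i)) ^ α i

/-- Multiplication of `(m'-1)`-jets at `x`. -/
def odot (m' : ℕ) {N : ℕ} (x : Fin N → ℝ) (P Q : MvPolynomial (Fin N) ℝ) :
    MvPolynomial (Fin N) ℝ :=
  jetAt m' x (P * Q)

/-- The unit multiindex in the `ξ_j` direction, as a multiindex on `ℝ^{n+D}`. -/
def xiIdx (n D : ℕ) (j : Fin D) : Fin (n + D) → ℕ :=
  fun i => if i = Fin.natAdd n j then 1 else 0

/-- The shape field used for `C^m` selection: `Γ((x₀,0), M)` consists of the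
polynomials `P ∈ 𝒫⁺` (degree ≤ m on `ℝ^{n+D}`) with `P(x₀,0) = 0`,
`∇_ξ P(x₀,0) ∈ K(x₀)`, and `|∂_x^α ∂_ξ^β P(x₀,0)| ≤ M` for `|α|+|β| ≤ m`. -/
def GammaSel (m n D : ℕ) (K : (Fin n → ℝ) → Set (Fin D → ℝ))
    (x₀ : Fin n → ℝ) (M : ℝ) : Set (MvPolynomial (Fin (n + D)) ℝ) :=
  {P | P.totalDegree ≤ m ∧
    MvPolynomial.eval (Fin.append x₀ 0) P = 0 ∧
    (fun j : Fin D => pdEval (xiIdx n D j) P (Fin.append x₀ 0)) ∈ K x₀ ∧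
    ∀ γ : Fin (n + D) → ℕ, (∑ i, γ i) ≤ m → |pdEval γ P (Fin.append x₀ 0)| ≤ M}

/-! Everything is read off at `z = (x₀, 0)`, where a jet product `⊙` agrees with the ordinary
product up to order `m`. Since `P₁(z) = P₂(z) = 0`, we get `P(z) = 0`, and the product rule
gives `∇_ξ P(z) = Q₁(z)² ∇_ξ P₁(z) + Q₂(z)² ∇_ξ P₂(z)`, a convex combination because
`Q₁(z)² + Q₂(z)² = 1`. For the derivative bounds, the partition of unity turns `P` into
`(Q₁ ⊙ Q₁)(P₁ - P₂) + P₂` up to order `m`, and by Leibniz' rule each derivative of the first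
term is a sum of products `δ^{-|α|} · M δ^{m+1-|β|}` with `|α| + |β| ≤ m`, each at most `M`. -/

open MvPolynomial

section Derivatives

variable {N : ℕ}

def pdiffEnd (β : Fin N → ℕ) : Module.End ℝ (MvPolynomial (Fin N) ℝ) :=
  ((List.finRange N).map fun i => (pderiv i).toLinearMap ^ β i).prod

theorem pdiff_eq_pdiffEnd (β : Fin N → ℕ) (P : MvPolynomial (Fin N) ℝ) :
    pdiff β P = pdiffEnd β P := by
  unfold pdiff pdiffEnd
  induction List.finRange N with
  | nil => rfl
  | cons i l ih =>
    simp only [List.foldr_cons, List.map_cons, List.prod_cons, ih, Module.End.mul_apply,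
      Module.End.pow_apply]
    rfl

def pdEvalₗ (β : Fin N → ℕ) (x : Fin N → ℝ) : MvPolynomial (Fin N) ℝ →ₗ[ℝ] ℝ :=
  (aeval x).toLinearMap ∘ₗ pdiffEnd β

theorem pdEvalₗ_apply (β : Fin N → ℕ) (x : Fin N → ℝ) (P : MvPolynomial (Fin N) ℝ) :
    pdEvalₗ β x P = pdEval β P x := by
  simp [pdEvalₗ, pdEval, pdiff_eq_pdiffEnd]

theorem pdEval_add (β : Fin N → ℕ) (P Q : MvPolynomial (Fin N) ℝ) (x : Fin N → ℝ) :
    pdEval β (P + Q) x = pdEval β P x + pdEval β Q x := by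
  simp only [← pdEvalₗ_apply, map_add]

theorem pdEval_smul (β : Fin N → ℕ) (c : ℝ) (P : MvPolynomial (Fin N) ℝ) (x : Fin N → ℝ) :
    pdEval β (c • P) x = c * pdEval β P x := by
  simp only [← pdEvalₗ_apply, map_smul, smul_eq_mul]

theorem pdEval_sum {ι : Type*} (s : Finset ι) (f : ι → MvPolynomial (Fin N) ℝ)
    (β : Fin N → ℕ) (x : Fin N → ℝ) :
    pdEval β (∑ i ∈ s, f i) x = ∑ i ∈ s, pdEval β (f i) x := by
  simp only [← pdEvalₗ_apply, map_sum]

theorem List.prod_map_pow_piSingle {ι M : Type*} [DecidableEq ι] [Monoid M] (f : ι → M) (i : ι)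
    {l : List ι} (hl : l.Nodup) :
    (l.map fun j => f j ^ (Pi.single i 1 : ι → ℕ) j).prod = if i ∈ l then f i else 1 := by
  induction l with
  | nil => simp
  | cons j l ih =>
    rw [List.nodup_cons] at hl
    by_cases hij : j = i
    · subst hij
      simp [hl.1, ih hl.2]
    · rw [List.map_cons, List.prod_cons, ih hl.2, Pi.single_eq_of_ne hij, pow_zero, one_mul]
      simp [Ne.symm hij]

theorem pdEval_single (i : Fin N) (P : MvPolynomial (Fin N) ℝ) (x : Fin N → ℝ) :
    pdEval (Pi.single i 1) P x = eval x (pderiv i P) := by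
  rw [pdEval, pdiff_eq_pdiffEnd, pdiffEnd,
    List.prod_map_pow_piSingle _ _ (List.nodup_finRange N), if_pos (List.mem_finRange i)]
  rfl

theorem pdEval_zero_index (P : MvPolynomial (Fin N) ℝ) (x : Fin N → ℝ) :
    pdEval 0 P x = eval x P := by
  simp [pdEval, pdiff_eq_pdiffEnd, pdiffEnd]

end Derivatives

section ShiftedMonomials

variable {N : ℕ}

def shiftedMonomial (z : Fin N → ℝ) (α : Fin N → ℕ) : MvPolynomial (Fin N) ℝ :=
  ∏ i, (X i - C (z i)) ^ α i

def multiIdxFactorial (α : Fin N → ℕ) : ℕ := ∏ i, (α i).factorial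

theorem multiIdxFactorial_pos (α : Fin N → ℕ) : 0 < multiIdxFactorial α :=
  Finset.prod_pos fun i _ => (α i).factorial_pos

theorem shiftedMonomial_eq_mul_prod_erase (z : Fin N → ℝ) (α : Fin N → ℕ) (i : Fin N) :
    shiftedMonomial z α =
      (X i - C (z i)) ^ α i * ∏ j ∈ Finset.univ.erase i, (X j - C (z j)) ^ α j :=
  (Finset.mul_prod_erase _ _ (Finset.mem_univ i)).symm

theorem pderiv_prod_erase (z : Fin N → ℝ) (α : Fin N → ℕ) (i : Fin N) :
    pderiv i (∏ j ∈ Finset.univ.erase i, (X j - C (z j) : MvPolynomial (Fin N) ℝ) ^ α j) = 0 := by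
  refine Finset.prod_induction _ (fun q => pderiv i q = 0) (fun a b ha hb => ?_) pderiv_one
    fun j hj => ?_
  · rw [Derivation.leibniz, ha, hb, smul_zero, smul_zero, add_zero]
  · simp [pderiv_X_of_ne (Finset.ne_of_mem_erase hj)]

theorem iterate_pderiv_pow_mul (z : Fin N → ℝ) (i : Fin N) {Q : MvPolynomial (Fin N) ℝ}
    (hQ : pderiv i Q = 0) (a k : ℕ) :
    (⇑(pderiv i))^[k] ((X i - C (z i)) ^ a * Q) =
      a.descFactorial k • ((X i - C (z i)) ^ (a - k) * Q) := by
  induction k with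
  | zero => simp
  | succ k ih =>
    rw [Function.iterate_succ_apply', ih, map_nsmul, pderiv_mul, hQ, mul_zero, add_zero,
      pderiv_pow, map_sub, pderiv_X_self, pderiv_C, sub_zero, mul_one,
      Nat.descFactorial_succ, Nat.sub_sub]
    simp only [nsmul_eq_mul, Nat.cast_mul]
    ring

theorem iterate_pderiv_shiftedMonomial (z : Fin N → ℝ) (α : Fin N → ℕ) (i : Fin N) (k : ℕ) :
    (⇑(pderiv i))^[k] (shiftedMonomial z α) =
      (α i).descFactorial k • shiftedMonomial z (Function.update α i (α i - k)) := by
  rw [shiftedMonomial_eq_mul_prod_erase z α i, iterate_pderiv_pow_mul z i (pderiv_prod_erase z α i),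
    shiftedMonomial_eq_mul_prod_erase _ _ i, Function.update_self]
  congr 2
  exact Finset.prod_congr rfl fun j hj => by rw [Function.update_of_ne (Finset.ne_of_mem_erase hj)]

theorem pdiffEnd_list_shiftedMonomial (z : Fin N → ℝ) (γ α : Fin N → ℕ) {l : List (Fin N)}
    (hl : l.Nodup) :
    ((l.map fun i => (pderiv i).toLinearMap ^ γ i).prod : Module.End ℝ _) (shiftedMonomial z α) =
      (∏ i ∈ l.toFinset, (α i).descFactorial (γ i)) •
        shiftedMonomial z (fun i => if i ∈ l then α i - γ i else α i) := by
  induction l with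
  | nil => simp
  | cons i l ih =>
    rw [List.nodup_cons] at hl
    rw [List.map_cons, List.prod_cons, Module.End.mul_apply, ih hl.2, map_nsmul,
      Module.End.pow_apply, Derivation.coeFn_coe, iterate_pderiv_shiftedMonomial, smul_smul,
      List.toFinset_cons, Finset.prod_insert (by simpa using hl.1), if_neg hl.1, mul_comm]
    congr 2
    funext j
    by_cases hj : j = i
    · subst hj; simp [hl.1]
    · simp [hj]

theorem pdiff_shiftedMonomial (z : Fin N → ℝ) (γ α : Fin N → ℕ) :
    pdiff γ (shiftedMonomial z α) =
      (∏ i, (α i).descFactorial (γ i)) • shiftedMonomial z (α - γ) := by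
  rw [pdiff_eq_pdiffEnd, pdiffEnd, pdiffEnd_list_shiftedMonomial z γ α (List.nodup_finRange N)]
  simp only [List.mem_finRange, if_true, List.toFinset_finRange]
  rfl

theorem eval_shiftedMonomial (z : Fin N → ℝ) (α : Fin N → ℕ) :
    eval z (shiftedMonomial z α) = if α = 0 then 1 else 0 := by
  split_ifs with h
  · simp [shiftedMonomial, h]
  · obtain ⟨i, hi⟩ : ∃ i, α i ≠ 0 := by
      by_contra! h'
      exact h (funext h')
    simp only [shiftedMonomial, map_prod, map_pow, map_sub, eval_X, eval_C, sub_self]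
    exact Finset.prod_eq_zero (Finset.mem_univ i) (zero_pow hi)

theorem pdEval_shiftedMonomial (z : Fin N → ℝ) (γ α : Fin N → ℕ) :
    pdEval γ (shiftedMonomial z α) z = if γ = α then (multiIdxFactorial γ : ℝ) else 0 := by
  rw [pdEval, pdiff_shiftedMonomial, map_nsmul, eval_shiftedMonomial, nsmul_eq_mul]
  by_cases hγα : γ = α
  · subst hγα
    simp [multiIdxFactorial, Nat.descFactorial_self]
  rw [if_neg hγα]
  split_ifs with hαγ
  · obtain ⟨i, hi⟩ : ∃ i, α i < γ i := by
      by_contra! h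
      exact hγα (le_antisymm (fun i => h i) (tsub_eq_zero_iff_le.1 hαγ))
    rw [Finset.prod_eq_zero (Finset.mem_univ i) (Nat.descFactorial_eq_zero_iff_lt.2 hi)]
    simp
  · rw [mul_zero]

theorem shiftedMonomial_mul (z : Fin N → ℝ) (α β : Fin N → ℕ) :
    shiftedMonomial z α * shiftedMonomial z β = shiftedMonomial z (α + β) := by
  simp only [shiftedMonomial, ← Finset.prod_mul_distrib, ← pow_add, Pi.add_apply]

theorem sum_le_totalDegree {σ R : Type*} [Fintype σ] [CommSemiring R] {T : MvPolynomial σ R}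
    {u : σ →₀ ℕ} (hu : u ∈ T.support) : ∑ i, u i ≤ T.totalDegree := by
  simpa [Finsupp.sum_fintype] using le_totalDegree hu

theorem totalDegree_prod_pow_le {σ τ R : Type*} [Fintype σ] [CommSemiring R]
    {g : σ → MvPolynomial τ R} (hg : ∀ i, (g i).totalDegree ≤ 1) (u : σ → ℕ) :
    (∏ i, g i ^ u i).totalDegree ≤ ∑ i, u i :=
  (totalDegree_finsetProd _ _).trans <| Finset.sum_le_sum fun i _ =>
    (totalDegree_pow _ _).trans (by simpa using Nat.mul_le_mul_left (u i) (hg i))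

theorem totalDegree_shiftedMonomial_le (z : Fin N → ℝ) (α : Fin N → ℕ) :
    (shiftedMonomial z α).totalDegree ≤ ∑ i, α i :=
  totalDegree_prod_pow_le (fun i => (totalDegree_sub _ _).trans (by simp)) α

end ShiftedMonomials

section Jets

variable {N : ℕ}

def taylorCoeff (z : Fin N → ℝ) (α : Fin N → ℕ) (R : MvPolynomial (Fin N) ℝ) : ℝ :=
  pdEval α R z / multiIdxFactorial α

theorem abs_taylorCoeff_le (z : Fin N → ℝ) (α : Fin N → ℕ) (R : MvPolynomial (Fin N) ℝ) :
    |taylorCoeff z α R| ≤ |pdEval α R z| := by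
  have h : (1 : ℝ) ≤ multiIdxFactorial α := by exact_mod_cast multiIdxFactorial_pos α
  rw [taylorCoeff, abs_div, Nat.abs_cast]
  exact div_le_self (abs_nonneg _) h

theorem jetAt_eq_sum (m' : ℕ) (z : Fin N → ℝ) (R : MvPolynomial (Fin N) ℝ) :
    jetAt m' z R = ∑ α ∈ multiIdx m' N, taylorCoeff z α R • shiftedMonomial z α := by
  simp only [jetAt, taylorCoeff, multiIdxFactorial, shiftedMonomial, smul_eq_C_mul]

theorem mem_multiIdx_succ {d : ℕ} {α : Fin N → ℕ} : α ∈ multiIdx (d + 1) N ↔ ∑ i, α i ≤ d := by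
  simp only [multiIdx, Finset.mem_filter, Fintype.mem_piFinset, Finset.mem_range,
    Nat.add_sub_cancel, and_iff_right_iff_imp]
  exact fun h i => Nat.lt_succ_of_le ((Finset.single_le_sum (by simp) (Finset.mem_univ i)).trans h)

def jetₗ (m' : ℕ) (z : Fin N → ℝ) : MvPolynomial (Fin N) ℝ →ₗ[ℝ] MvPolynomial (Fin N) ℝ where
  toFun := jetAt m' z
  map_add' P Q := by
    simp only [jetAt_eq_sum, taylorCoeff, pdEval_add, add_div, add_smul, Finset.sum_add_distrib]
  map_smul' c P := by
    simp only [jetAt_eq_sum, taylorCoeff, pdEval_smul, mul_div_assoc, mul_smul, Finset.smul_sum,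
      RingHom.id_apply]

theorem pdEval_jetAt {d : ℕ} (z : Fin N → ℝ) (R : MvPolynomial (Fin N) ℝ) {γ : Fin N → ℕ}
    (hγ : ∑ i, γ i ≤ d) : pdEval γ (jetAt (d + 1) z R) z = pdEval γ R z := by
  rw [jetAt_eq_sum, pdEval_sum, Finset.sum_eq_single_of_mem γ (mem_multiIdx_succ.2 hγ)]
  · rw [pdEval_smul, pdEval_shiftedMonomial, if_pos rfl, taylorCoeff,
      div_mul_cancel₀ _ (by exact_mod_cast (multiIdxFactorial_pos γ).ne')]
  · intro α _ hα
    rw [pdEval_smul, pdEval_shiftedMonomial, if_neg (Ne.symm hα), mul_zero]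

theorem eval_jetAt (d : ℕ) (z : Fin N → ℝ) (R : MvPolynomial (Fin N) ℝ) :
    eval z (jetAt (d + 1) z R) = eval z R := by
  simpa only [pdEval_zero_index] using pdEval_jetAt (d := d) z R (γ := 0) (by simp)

theorem totalDegree_jetAt_le (d : ℕ) (z : Fin N → ℝ) (R : MvPolynomial (Fin N) ℝ) :
    (jetAt (d + 1) z R).totalDegree ≤ d := by
  rw [jetAt_eq_sum]
  refine (totalDegree_finsetSum _ _).trans (Finset.sup_le fun α hα => ?_)
  exact (totalDegree_smul_le _ _).trans
    ((totalDegree_shiftedMonomial_le z α).trans (mem_multiIdx_succ.1 hα))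

theorem jetAt_shiftedMonomial {d : ℕ} (z : Fin N → ℝ) {β : Fin N → ℕ} (hβ : ∑ i, β i ≤ d) :
    jetAt (d + 1) z (shiftedMonomial z β) = shiftedMonomial z β := by
  rw [jetAt_eq_sum, Finset.sum_eq_single_of_mem β (mem_multiIdx_succ.2 hβ)]
  · rw [taylorCoeff, pdEval_shiftedMonomial, if_pos rfl,
      div_self (by exact_mod_cast (multiIdxFactorial_pos β).ne'), one_smul]
  · intro α _ hα
    rw [taylorCoeff, pdEval_shiftedMonomial, if_neg hα, zero_div, zero_smul]

theorem totalDegree_aeval_le {σ τ R : Type*} [Fintype σ] [CommSemiring R]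
    {g : σ → MvPolynomial τ R} (hg : ∀ i, (g i).totalDegree ≤ 1) (T : MvPolynomial σ R) :
    (aeval g T).totalDegree ≤ T.totalDegree := by
  rw [aeval_eq_eval₂Hom, coe_eval₂Hom, eval₂_eq']
  refine (totalDegree_finsetSum _ _).trans (Finset.sup_le fun u hu => ?_)
  rw [algebraMap_eq, ← smul_eq_C_mul]
  exact (totalDegree_smul_le _ _).trans ((totalDegree_prod_pow_le hg _).trans (sum_le_totalDegree hu))

theorem aeval_sub_C_eq_sum (z : Fin N → ℝ) (S : MvPolynomial (Fin N) ℝ) :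
    aeval (fun i => X i - C (z i)) S = ∑ u ∈ S.support, S.coeff u • shiftedMonomial z u := by
  rw [aeval_eq_eval₂Hom, coe_eval₂Hom, eval₂_eq']
  simp only [algebraMap_eq, smul_eq_C_mul, shiftedMonomial]

-- `T` is recovered from its translate `T(X + z)`, which has the same degree.
theorem mem_span_shiftedMonomial (z : Fin N → ℝ) {d : ℕ} {T : MvPolynomial (Fin N) ℝ}
    (hT : T.totalDegree ≤ d) :
    T ∈ Submodule.span ℝ (shiftedMonomial z '' {α | ∑ i, α i ≤ d}) := by
  set S := aeval (fun i => X i + C (z i)) T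
  have hS : S.totalDegree ≤ d :=
    (totalDegree_aeval_le (fun i => (totalDegree_add _ _).trans (by simp)) T).trans hT
  have hTS : T = aeval (fun i => X i - C (z i)) S := by
    rw [← AlgHom.comp_apply, show (aeval fun i => X i - C (z i)).comp
      (aeval fun i => X i + C (z i)) = AlgHom.id ℝ (MvPolynomial (Fin N) ℝ) from
      algHom_ext fun i => by simp, AlgHom.id_apply]
  rw [hTS, aeval_sub_C_eq_sum]
  exact Submodule.sum_mem _ fun u hu => Submodule.smul_mem _ _
    (Submodule.subset_span ⟨u, (sum_le_totalDegree hu).trans hS, rfl⟩)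

theorem jetAt_eq_self {d : ℕ} (z : Fin N → ℝ) {T : MvPolynomial (Fin N) ℝ}
    (hT : T.totalDegree ≤ d) : jetAt (d + 1) z T = T := by
  have hspan : Submodule.span ℝ (shiftedMonomial z '' {α | ∑ i, α i ≤ d}) ≤
      LinearMap.eqLocus (jetₗ (d + 1) z) LinearMap.id :=
    Submodule.span_le.2 fun _ ⟨_, hβ, hP⟩ => hP ▸ jetAt_shiftedMonomial z hβ
  exact hspan (mem_span_shiftedMonomial z hT)

end Jets

section Leibniz

variable {N : ℕ}

theorem sum_add_sum_eq_of_add_eq {α β γ : Fin N → ℕ} (h : α + β = γ) :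
    ∑ i, α i + ∑ i, β i = ∑ i, γ i := by
  rw [← h, ← Finset.sum_add_distrib]
  rfl

theorem pdEval_mul_eq_sum {d : ℕ} (z : Fin N → ℝ) {A B : MvPolynomial (Fin N) ℝ}
    (hA : A.totalDegree ≤ d) (hB : B.totalDegree ≤ d) (γ : Fin N → ℕ) :
    pdEval γ (A * B) z = multiIdxFactorial γ *
      ∑ p ∈ (multiIdx (d + 1) N ×ˢ multiIdx (d + 1) N).filter (fun p => p.1 + p.2 = γ),
        taylorCoeff z p.1 A * taylorCoeff z p.2 B := by
  conv_lhs => rw [← jetAt_eq_self z hA, ← jetAt_eq_self z hB, jetAt_eq_sum, jetAt_eq_sum,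
    Finset.sum_mul_sum, ← Finset.sum_product', pdEval_sum]
  rw [Finset.sum_filter, Finset.mul_sum]
  refine Finset.sum_congr rfl fun p _ => ?_
  rw [smul_mul_smul_comm, shiftedMonomial_mul, pdEval_smul, pdEval_shiftedMonomial]
  simp only [eq_comm (a := γ)]
  split_ifs <;> ring

theorem card_filter_add_eq_le {d mm : ℕ} {γ : Fin N → ℕ} (hγ : ∑ i, γ i ≤ mm) :
    ((multiIdx (d + 1) N ×ˢ multiIdx (d + 1) N).filter (fun p => p.1 + p.2 = γ)).card ≤
      (multiIdx (mm + 1) N).card := by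
  refine Finset.card_le_card_of_injOn Prod.fst (fun p hp => ?_) fun p hp q hq hpq => ?_
  · have hs := sum_add_sum_eq_of_add_eq (Finset.mem_filter.1 hp).2
    exact mem_multiIdx_succ.2 (by omega)
  · have h := (Finset.mem_filter.1 hp).2.trans (Finset.mem_filter.1 hq).2.symm
    rw [hpq] at h
    exact Prod.ext hpq (add_left_cancel h)

theorem multiIdxFactorial_le {mm : ℕ} {γ : Fin N → ℕ} (hγ : ∑ i, γ i ≤ mm) :
    multiIdxFactorial γ ≤ mm.factorial ^ N := by
  simpa [multiIdxFactorial] using Finset.prod_le_pow_card Finset.univ _ _ fun i _ =>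
    Nat.factorial_le ((Finset.single_le_sum (by simp) (Finset.mem_univ i)).trans hγ)

def leibnizConst (mm N : ℕ) : ℝ := (mm.factorial : ℝ) ^ N * (multiIdx (mm + 1) N).card

theorem leibnizConst_nonneg (mm N : ℕ) : 0 ≤ leibnizConst mm N := by
  unfold leibnizConst
  positivity

theorem abs_pdEval_mul_le {mm : ℕ} {z : Fin N → ℝ} {A B : MvPolynomial (Fin N) ℝ}
    {γ : Fin N → ℕ} (hγ : ∑ i, γ i ≤ mm) {c : ℝ}
    (hc : ∀ α β, α + β = γ → |pdEval α A z| * |pdEval β B z| ≤ c) :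
    |pdEval γ (A * B) z| ≤ leibnizConst mm N * c := by
  have hc0 : 0 ≤ c := (mul_nonneg (abs_nonneg _) (abs_nonneg _)).trans (hc 0 γ (zero_add γ))
  rw [pdEval_mul_eq_sum z (le_max_left A.totalDegree B.totalDegree) (le_max_right _ _),
    abs_mul, Nat.abs_cast, leibnizConst, mul_assoc]
  refine mul_le_mul (by exact_mod_cast multiIdxFactorial_le hγ) ?_ (abs_nonneg _) (by positivity)
  refine (Finset.abs_sum_le_sum_abs _ _).trans
    ((Finset.sum_le_card_nsmul _ _ c fun p hp => ?_).trans ?_)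
  · rw [abs_mul]
    exact (mul_le_mul (abs_taylorCoeff_le z _ A) (abs_taylorCoeff_le z _ B) (abs_nonneg _)
      (abs_nonneg _)).trans (hc _ _ (Finset.mem_filter.1 hp).2)
  · rw [nsmul_eq_mul]
    exact mul_le_mul_of_nonneg_right (by exact_mod_cast card_filter_add_eq_le hγ) hc0

end Leibniz

section Estimates

variable {N : ℕ}

theorem zpow_neg_mul_pow_le_one {δ : ℝ} (h0 : 0 < δ) (h1 : δ ≤ 1) {a k : ℕ} (h : a ≤ k) :
    δ ^ (-(a : ℤ)) * δ ^ k ≤ 1 := by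
  rw [zpow_neg, zpow_natCast, ← Nat.sub_add_cancel h, pow_add, mul_comm (δ ^ (k - a)),
    ← mul_assoc, inv_mul_cancel₀ (pow_ne_zero _ h0.ne'), one_mul]
  exact pow_le_one₀ h0.le h1

theorem abs_pdEval_mul_self_le {mm : ℕ} {z : Fin N → ℝ} {δ : ℝ} (hδ : 0 < δ)
    {Q : MvPolynomial (Fin N) ℝ}
    (hQ : ∀ γ : Fin N → ℕ, ∑ i, γ i ≤ mm → |pdEval γ Q z| ≤ δ ^ (-(∑ i, (γ i : ℤ))))
    {γ : Fin N → ℕ} (hγ : ∑ i, γ i ≤ mm) :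
    |pdEval γ (Q * Q) z| ≤ leibnizConst mm N * δ ^ (-(∑ i, (γ i : ℤ))) :=
  abs_pdEval_mul_le hγ fun α β hαβ => by
    have hs := sum_add_sum_eq_of_add_eq hαβ
    calc _ ≤ δ ^ (-(∑ i, (α i : ℤ))) * δ ^ (-(∑ i, (β i : ℤ))) :=
          mul_le_mul (hQ α (by omega)) (hQ β (by omega)) (abs_nonneg _) (zpow_pos hδ _).le
      _ = δ ^ (-(∑ i, (γ i : ℤ))) := by
          rw [← zpow_add₀ hδ.ne', ← hαβ]
          congr 1
          simp [Finset.sum_add_distrib]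
          ring

theorem abs_pdEval_mul_le_of_scaled {mm : ℕ} {z : Fin N → ℝ} {δ L M : ℝ} (h0 : 0 < δ)
    (h1 : δ ≤ 1) (hL : 0 ≤ L) (hM : 0 ≤ M) {A B : MvPolynomial (Fin N) ℝ}
    (hA : ∀ α : Fin N → ℕ, ∑ i, α i ≤ mm → |pdEval α A z| ≤ L * δ ^ (-(∑ i, (α i : ℤ))))
    (hB : ∀ β : Fin N → ℕ, ∑ i, β i ≤ mm → |pdEval β B z| ≤ M * δ ^ (mm + 1 - ∑ i, β i))
    {γ : Fin N → ℕ} (hγ : ∑ i, γ i ≤ mm) :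
    |pdEval γ (A * B) z| ≤ leibnizConst mm N * (L * M) :=
  abs_pdEval_mul_le hγ fun α β hαβ => by
    have hs := sum_add_sum_eq_of_add_eq hαβ
    calc _ ≤ (L * δ ^ (-(∑ i, (α i : ℤ)))) * (M * δ ^ (mm + 1 - ∑ i, β i)) :=
          mul_le_mul (hA α (by omega)) (hB β (by omega)) (abs_nonneg _)
            (mul_nonneg hL (zpow_pos h0 _).le)
      _ = L * M * (δ ^ (-((∑ i, α i : ℕ) : ℤ)) * δ ^ (mm + 1 - ∑ i, β i)) := by
          push_cast
          ring
      _ ≤ L * M :=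
          mul_le_of_le_one_right (mul_nonneg hL hM) (zpow_neg_mul_pow_le_one h0 h1 (by omega))

end Estimates

section JetProducts

variable {N d : ℕ} {z : Fin N → ℝ} {Q₁ Q₂ P₁ P₂ : MvPolynomial (Fin N) ℝ}

theorem eval_odot (d : ℕ) (z : Fin N → ℝ) (P Q : MvPolynomial (Fin N) ℝ) :
    eval z (odot (d + 1) z P Q) = eval z P * eval z Q := by
  rw [odot, eval_jetAt, map_mul]

theorem pdEval_odot (z : Fin N → ℝ) (P Q : MvPolynomial (Fin N) ℝ) {γ : Fin N → ℕ}
    (hγ : ∑ i, γ i ≤ d) : pdEval γ (odot (d + 1) z P Q) z = pdEval γ (P * Q) z :=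
  pdEval_jetAt z _ hγ

theorem totalDegree_odot_le (d : ℕ) (z : Fin N → ℝ) (P Q : MvPolynomial (Fin N) ℝ) :
    (odot (d + 1) z P Q).totalDegree ≤ d :=
  totalDegree_jetAt_le d z _

theorem pdEval_single_odot_of_eval_eq_zero (hd : 1 ≤ d) (i : Fin N) (A : MvPolynomial (Fin N) ℝ)
    {P : MvPolynomial (Fin N) ℝ} (hP : eval z P = 0) :
    pdEval (Pi.single i 1) (odot (d + 1) z A P) z = eval z A * pdEval (Pi.single i 1) P z := by
  rw [pdEval_odot z A P (by simpa using hd), pdEval_single, pdEval_single, pderiv_mul, map_add,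
    map_mul, map_mul, hP, mul_zero, zero_add]

theorem eval_sq_add_eval_sq_eq_one
    (hpart : odot (d + 1) z Q₁ Q₁ + odot (d + 1) z Q₂ Q₂ = 1) :
    eval z Q₁ ^ 2 + eval z Q₂ ^ 2 = 1 := by
  simpa [eval_odot, sq] using congrArg (eval z) hpart

theorem pdEval_single_odot_add_odot (hd : 1 ≤ d) (i : Fin N) (hP₁ : eval z P₁ = 0)
    (hP₂ : eval z P₂ = 0) :
    pdEval (Pi.single i 1) (odot (d + 1) z (odot (d + 1) z Q₁ Q₁) P₁ +
        odot (d + 1) z (odot (d + 1) z Q₂ Q₂) P₂) z =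
      eval z Q₁ ^ 2 * pdEval (Pi.single i 1) P₁ z + eval z Q₂ ^ 2 * pdEval (Pi.single i 1) P₂ z := by
  rw [pdEval_add, pdEval_single_odot_of_eval_eq_zero hd i _ hP₁,
    pdEval_single_odot_of_eval_eq_zero hd i _ hP₂, eval_odot, eval_odot, sq, sq]

theorem pdEval_odot_add_odot_eq (hpart : odot (d + 1) z Q₁ Q₁ + odot (d + 1) z Q₂ Q₂ = 1)
    {γ : Fin N → ℕ} (hγ : ∑ i, γ i ≤ d) :
    pdEval γ (odot (d + 1) z (odot (d + 1) z Q₁ Q₁) P₁ +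
        odot (d + 1) z (odot (d + 1) z Q₂ Q₂) P₂) z =
      pdEval γ (odot (d + 1) z Q₁ Q₁ * (P₁ - P₂)) z + pdEval γ P₂ z := by
  rw [pdEval_add, pdEval_odot z _ _ hγ, pdEval_odot z _ _ hγ, ← pdEval_add, ← pdEval_add]
  congr 1
  linear_combination P₂ * hpart

theorem abs_pdEval_odot_add_odot_le {δ M : ℝ} (h0 : 0 < δ) (h1 : δ ≤ 1) (hM : 0 ≤ M)
    (hpart : odot (d + 1) z Q₁ Q₁ + odot (d + 1) z Q₂ Q₂ = 1)
    (hQ₁ : ∀ γ : Fin N → ℕ, ∑ i, γ i ≤ d → |pdEval γ Q₁ z| ≤ δ ^ (-(∑ i, (γ i : ℤ))))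
    (hdiff : ∀ γ : Fin N → ℕ, ∑ i, γ i ≤ d →
      |pdEval γ (P₁ - P₂) z| ≤ M * δ ^ (d + 1 - ∑ i, γ i))
    (hP₂ : ∀ γ : Fin N → ℕ, ∑ i, γ i ≤ d → |pdEval γ P₂ z| ≤ M)
    {γ : Fin N → ℕ} (hγ : ∑ i, γ i ≤ d) :
    |pdEval γ (odot (d + 1) z (odot (d + 1) z Q₁ Q₁) P₁ +
        odot (d + 1) z (odot (d + 1) z Q₂ Q₂) P₂) z| ≤ (leibnizConst d N ^ 2 + 1) * M := by
  have hA (α : Fin N → ℕ) (hα : ∑ i, α i ≤ d) : |pdEval α (odot (d + 1) z Q₁ Q₁) z| ≤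
      leibnizConst d N * δ ^ (-(∑ i, (α i : ℤ))) := by
    rw [pdEval_odot z _ _ hα]
    exact abs_pdEval_mul_self_le h0 hQ₁ hα
  rw [pdEval_odot_add_odot_eq hpart hγ]
  calc _ ≤ |pdEval γ (odot (d + 1) z Q₁ Q₁ * (P₁ - P₂)) z| + |pdEval γ P₂ z| := abs_add_le _ _
    _ ≤ leibnizConst d N * (leibnizConst d N * M) + M :=
        add_le_add (abs_pdEval_mul_le_of_scaled h0 h1 (leibnizConst_nonneg d N) hM hA hdiff hγ)
          (hP₂ γ hγ)
    _ = _ := by ring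

end JetProducts

section ShapeField

variable {m n D : ℕ} {K : (Fin n → ℝ) → Set (Fin D → ℝ)} {x₀ : Fin n → ℝ}

theorem xiIdx_eq_single (j : Fin D) : xiIdx n D j = Pi.single (Fin.natAdd n j) 1 := by
  funext i
  simp [xiIdx, Pi.single_apply]

theorem convex_gammaSel {M : ℝ} (hK : Convex ℝ (K x₀)) : Convex ℝ (GammaSel m n D K x₀ M) := by
  rintro P ⟨hPd, hPe, hPg, hPb⟩ Q ⟨hQd, hQe, hQg, hQb⟩ a b ha hb hab
  refine ⟨(totalDegree_add _ _).trans (max_le ((totalDegree_smul_le _ _).trans hPd)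
    ((totalDegree_smul_le _ _).trans hQd)), by simp [hPe, hQe], ?_, fun γ hγ => ?_⟩
  · convert hK hPg hQg ha hb hab using 1
    funext j
    simp [pdEval_add, pdEval_smul]
  · have := convex_Icc (-M) M (abs_le.1 (hPb γ hγ)) (abs_le.1 (hQb γ hγ)) ha hb hab
    exact abs_le.2 (by simpa [pdEval_add, pdEval_smul] using this)

theorem gammaSel_mono {M' M : ℝ} (h : M' ≤ M) :
    GammaSel m n D K x₀ M' ⊆ GammaSel m n D K x₀ M :=
  fun _ ⟨hd, he, hg, hb⟩ => ⟨hd, he, hg, fun γ hγ => (hb γ hγ).trans h⟩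

end ShapeField

theorem selection_shape_field_general (m n D : ℕ) (hm : 0 < m) :
    ∃ C : ℝ, 0 < C ∧
      ∀ (E : Set (Fin n → ℝ)), E.Finite →
      ∀ K : (Fin n → ℝ) → Set (Fin D → ℝ), (∀ x ∈ E, Convex ℝ (K x)) →
        -- shape field properties
        (∀ x₀ ∈ E, ∀ M : ℝ, 0 < M → Convex ℝ (GammaSel m n D K x₀ M) ∧
          ∀ M' : ℝ, 0 < M' → M' ≤ M → GammaSel m n D K x₀ M' ⊆ GammaSel m n D K x₀ M) ∧
        -- (C, 1)-convexity, together with the explicit formula for ∇_ξ P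
        (∀ δ : ℝ, 0 < δ → δ ≤ 1 → ∀ x₀ ∈ E, ∀ M : ℝ, 0 < M →
          ∀ P₁ P₂ Q₁ Q₂ : MvPolynomial (Fin (n + D)) ℝ,
            P₁ ∈ GammaSel m n D K x₀ M → P₂ ∈ GammaSel m n D K x₀ M →
            (∀ γ : Fin (n + D) → ℕ, (∑ i, γ i) ≤ m →
              |pdEval γ (P₁ - P₂) (Fin.append x₀ 0)| ≤ M * δ ^ (m + 1 - ∑ i, γ i)) →
            (∀ γ : Fin (n + D) → ℕ, (∑ i, γ i) ≤ m →
              |pdEval γ Q₁ (Fin.append x₀ 0)| ≤ δ ^ (-(∑ i, (γ i : ℤ))) ∧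
              |pdEval γ Q₂ (Fin.append x₀ 0)| ≤ δ ^ (-(∑ i, (γ i : ℤ)))) →
            odot (m + 1) (Fin.append x₀ 0) Q₁ Q₁ +
              odot (m + 1) (Fin.append x₀ 0) Q₂ Q₂ = 1 →
            MvPolynomial.eval (Fin.append x₀ 0)
              (odot (m + 1) (Fin.append x₀ 0) (odot (m + 1) (Fin.append x₀ 0) Q₁ Q₁) P₁ +
               odot (m + 1) (Fin.append x₀ 0) (odot (m + 1) (Fin.append x₀ 0) Q₂ Q₂) P₂) = 0 ∧
            (∀ j : Fin D,
              pdEval (xiIdx n D j)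
                (odot (m + 1) (Fin.append x₀ 0) (odot (m + 1) (Fin.append x₀ 0) Q₁ Q₁) P₁ +
                 odot (m + 1) (Fin.append x₀ 0) (odot (m + 1) (Fin.append x₀ 0) Q₂ Q₂) P₂)
                (Fin.append x₀ 0) =
              (MvPolynomial.eval (Fin.append x₀ 0) Q₁) ^ 2 *
                pdEval (xiIdx n D j) P₁ (Fin.append x₀ 0) +
              (MvPolynomial.eval (Fin.append x₀ 0) Q₂) ^ 2 *
                pdEval (xiIdx n D j) P₂ (Fin.append x₀ 0)) ∧
            (fun j : Fin D =>
              pdEval (xiIdx n D j)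
                (odot (m + 1) (Fin.append x₀ 0) (odot (m + 1) (Fin.append x₀ 0) Q₁ Q₁) P₁ +
                 odot (m + 1) (Fin.append x₀ 0) (odot (m + 1) (Fin.append x₀ 0) Q₂ Q₂) P₂)
                (Fin.append x₀ 0)) ∈ K x₀ ∧
            (odot (m + 1) (Fin.append x₀ 0) (odot (m + 1) (Fin.append x₀ 0) Q₁ Q₁) P₁ +
             odot (m + 1) (Fin.append x₀ 0) (odot (m + 1) (Fin.append x₀ 0) Q₂ Q₂) P₂) ∈
              GammaSel m n D K x₀ (C * M)) := by
  refine ⟨leibnizConst m (n + D) ^ 2 + 1, by positivity, fun E _ K hK =>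
    ⟨fun x₀ hx₀ M _ => ⟨convex_gammaSel (hK x₀ hx₀), fun _ _ h => gammaSel_mono h⟩, ?_⟩⟩
  intro δ hδ0 hδ1 x₀ hx₀ M hM P₁ P₂ Q₁ Q₂ hP₁ hP₂ hdiff hQ hpart
  obtain ⟨-, hP₁z, hP₁K, -⟩ := hP₁
  obtain ⟨-, hP₂z, hP₂K, hP₂b⟩ := hP₂
  set z : Fin (n + D) → ℝ := Fin.append x₀ 0
  set P := odot (m + 1) z (odot (m + 1) z Q₁ Q₁) P₁ + odot (m + 1) z (odot (m + 1) z Q₂ Q₂) P₂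
  have hzero : eval z P = 0 := by
    simp only [P, map_add, eval_odot, hP₁z, hP₂z, mul_zero, add_zero]
  have hgrad (j : Fin D) : pdEval (xiIdx n D j) P z =
      eval z Q₁ ^ 2 * pdEval (xiIdx n D j) P₁ z + eval z Q₂ ^ 2 * pdEval (xiIdx n D j) P₂ z := by
    simp only [xiIdx_eq_single]
    exact pdEval_single_odot_add_odot hm _ hP₁z hP₂z
  have hgradK : (fun j => pdEval (xiIdx n D j) P z) ∈ K x₀ := by
    convert hK x₀ hx₀ hP₁K hP₂K (sq_nonneg _) (sq_nonneg _)
      (eval_sq_add_eval_sq_eq_one hpart) using 1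
    funext j
    simp [hgrad j]
  exact ⟨hzero, hgrad, hgradK, (totalDegree_add _ _).trans
    (max_le (totalDegree_odot_le _ _ _ _) (totalDegree_odot_le _ _ _ _)), hzero, hgradK,
    fun γ hγ => abs_pdEval_odot_add_odot_le hδ0 hδ1 hM.le hpart (fun γ hγ => (hQ γ hγ).1) hdiff
      hP₂b hγ⟩

/-- Lemma 13.1: `Γ⃗ = (Γ((x₀,0), M))` is a `(C, 1)`-convex shape field on
`E⁺ = E × {0}` (with parameters `m+1`, `n+D`), for a constant `C` depending only
on `m`, `n`, `D`.  In particular, with `z = (x₀, 0)`, if `P₁, P₂ ∈ Γ(z, M)`,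
`|∂^γ(P₁-P₂)(z)| ≤ M δ^{(m+1)-|γ|}`, `|∂^γ Q_i(z)| ≤ δ^{-|γ|}` for `|γ| ≤ m`
with `0 < δ ≤ 1`, and `Q₁⊙Q₁ + Q₂⊙Q₂ = 1`, then
`P = Q₁⊙Q₁⊙P₁ + Q₂⊙Q₂⊙P₂` satisfies `P(z) = 0`,
`∇_ξ P(z) = Q₁(z)² ∇_ξ P₁(z) + Q₂(z)² ∇_ξ P₂(z) ∈ K(x₀)`, and `P ∈ Γ(z, CM)`. -/
theorem selection_shape_field (m n D : ℕ) (hm : 0 < m) (hn : 0 < n) (hD : 0 < D) :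
    ∃ C : ℝ, 0 < C ∧
      ∀ (E : Set (Fin n → ℝ)), E.Finite →
      ∀ K : (Fin n → ℝ) → Set (Fin D → ℝ), (∀ x ∈ E, Convex ℝ (K x)) →
        -- shape field properties
        (∀ x₀ ∈ E, ∀ M : ℝ, 0 < M → Convex ℝ (GammaSel m n D K x₀ M) ∧
          ∀ M' : ℝ, 0 < M' → M' ≤ M → GammaSel m n D K x₀ M' ⊆ GammaSel m n D K x₀ M) ∧
        -- (C, 1)-convexity, together with the explicit formula for ∇_ξ P
        (∀ δ : ℝ, 0 < δ → δ ≤ 1 → ∀ x₀ ∈ E, ∀ M : ℝ, 0 < M →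
          ∀ P₁ P₂ Q₁ Q₂ : MvPolynomial (Fin (n + D)) ℝ,
            P₁ ∈ GammaSel m n D K x₀ M → P₂ ∈ GammaSel m n D K x₀ M →
            (∀ γ : Fin (n + D) → ℕ, (∑ i, γ i) ≤ m →
              |pdEval γ (P₁ - P₂) (Fin.append x₀ 0)| ≤ M * δ ^ (m + 1 - ∑ i, γ i)) →
            (∀ γ : Fin (n + D) → ℕ, (∑ i, γ i) ≤ m →
              |pdEval γ Q₁ (Fin.append x₀ 0)| ≤ δ ^ (-(∑ i, (γ i : ℤ))) ∧
              |pdEval γ Q₂ (Fin.append x₀ 0)| ≤ δ ^ (-(∑ i, (γ i : ℤ)))) →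
            odot (m + 1) (Fin.append x₀ 0) Q₁ Q₁ +
              odot (m + 1) (Fin.append x₀ 0) Q₂ Q₂ = 1 →
            MvPolynomial.eval (Fin.append x₀ 0)
              (odot (m + 1) (Fin.append x₀ 0) (odot (m + 1) (Fin.append x₀ 0) Q₁ Q₁) P₁ +
               odot (m + 1) (Fin.append x₀ 0) (odot (m + 1) (Fin.append x₀ 0) Q₂ Q₂) P₂) = 0 ∧
            (∀ j : Fin D,
              pdEval (xiIdx n D j)
                (odot (m + 1) (Fin.append x₀ 0) (odot (m + 1) (Fin.append x₀ 0) Q₁ Q₁) P₁ +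
                 odot (m + 1) (Fin.append x₀ 0) (odot (m + 1) (Fin.append x₀ 0) Q₂ Q₂) P₂)
                (Fin.append x₀ 0) =
              (MvPolynomial.eval (Fin.append x₀ 0) Q₁) ^ 2 *
                pdEval (xiIdx n D j) P₁ (Fin.append x₀ 0) +
              (MvPolynomial.eval (Fin.append x₀ 0) Q₂) ^ 2 *
                pdEval (xiIdx n D j) P₂ (Fin.append x₀ 0)) ∧
            (fun j : Fin D =>
              pdEval (xiIdx n D j)
                (odot (m + 1) (Fin.append x₀ 0) (odot (m + 1) (Fin.append x₀ 0) Q₁ Q₁) P₁ +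
                 odot (m + 1) (Fin.append x₀ 0) (odot (m + 1) (Fin.append x₀ 0) Q₂ Q₂) P₂)
                (Fin.append x₀ 0)) ∈ K x₀ ∧
            (odot (m + 1) (Fin.append x₀ 0) (odot (m + 1) (Fin.append x₀ 0) Q₁ Q₁) P₁ +
             odot (m + 1) (Fin.append x₀ 0) (odot (m + 1) (Fin.append x₀ 0) Q₂ Q₂) P₂) ∈
              GammaSel m n D K x₀ (C * M)) :=
  selection_shape_field_general m n D hm

end
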